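/- Let ℰ be a symmetric exponential random variable with variance 1 (density 2^{-1/2} exp(−√2 |x|)). Then for all real numbers a, b and every real p ≥ 2: E|aℰ + b|^p = |b|^p + (p(p−1)/2) a^2 E|aℰ + b|^{p−2}. -/

import Mathlib

/-!
The density `φ x = exp (-√2 |x|) / √2` satisfies `φ'' = 2 φ - 2 δ₀`, so two integrations by parts
give `E f(ℰ) = f 0 + E f''(ℰ) / 2` for every `C²` function `f` whose derivatives grow at most
polynomially. On each half-line this is the fundamental theorem of calculus for the primitive
`-(c f + f') e^{-c x}` of `(c² f - f'') e^{-c x}`. For `f x = |a x + b| ^ p` one has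
`f'' x = p (p - 1) a² |a x + b| ^ (p - 2)`, which is the claimed identity.
-/

open MeasureTheory ProbabilityTheory Real
open scoped ENNReal

/-- The law of a symmetric exponential random variable with variance 1:
density `2^{-1/2} exp(-√2 |x|)` with respect to Lebesgue measure. -/
noncomputable def symExpLaw : Measure ℝ :=
  volume.withDensity fun x =>
    ENNReal.ofReal ((Real.sqrt 2)⁻¹ * Real.exp (-(Real.sqrt 2 * |x|)))

open Filter Set Asymptotics
open scoped Topology

theorem hasDerivAt_mul_abs_rpow {q : ℝ} (hq : 0 ≤ q) (t : ℝ) :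
    HasDerivAt (fun s : ℝ => s * |s| ^ q) ((q + 1) * |t| ^ q) t := by
  have hne : ∀ s ≠ (0 : ℝ), HasDerivAt (fun s : ℝ => s * |s| ^ q) ((q + 1) * |s| ^ q) s := by
    intro s hs
    have hs' : |s| ≠ 0 := abs_ne_zero.mpr hs
    refine ((hasDerivAt_id s).mul
      ((hasDerivAt_abs hs).rpow_const (p := q) (Or.inl hs'))).congr_deriv ?_
    have hsign : s * (SignType.sign s : ℝ) = |s| := by
      rcases hs.lt_or_gt with h | h <;> simp [h, abs_of_neg, abs_of_pos]
    rw [Real.rpow_sub_one hs']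
    field_simp
    rw [id, hsign]
    ring
  rcases eq_or_ne t 0 with rfl | ht
  · have hcont : Continuous fun s : ℝ => |s| ^ q := continuous_abs.rpow_const fun _ => Or.inr hq
    exact hasDerivAt_of_hasDerivAt_of_ne hne (by fun_prop)
      (continuous_const.mul hcont).continuousAt
  · exact hne t ht

theorem tendsto_one_add_abs_rpow_mul_exp_neg_abs (k : ℝ) {c : ℝ} (hc : 0 < c) :
    Tendsto (fun x : ℝ => (1 + |x|) ^ k * exp (-(c * |x|))) (cocompact ℝ) (𝓝 0) := by
  have h1 : Tendsto (fun x : ℝ => 1 + |x|) (cocompact ℝ) atTop :=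
    tendsto_atTop_add_const_left _ _ tendsto_norm_cocompact_atTop
  have := ((tendsto_rpow_mul_exp_neg_mul_atTop_nhds_zero k c hc).comp h1).const_mul (exp c)
  rw [mul_zero] at this
  refine this.congr fun x => ?_
  simp only [Function.comp_apply, mul_comm (exp c), mul_assoc, ← exp_add]
  ring_nf

section PolynomialGrowth

variable {g : ℝ → ℝ} {k c : ℝ}

theorem Asymptotics.IsBigO.tendsto_mul_exp_neg_abs
    (hg : g =O[cocompact ℝ] fun x => (1 + |x|) ^ k) (hc : 0 < c) :
    Tendsto (fun x => g x * exp (-(c * |x|))) (cocompact ℝ) (𝓝 0) :=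
  (hg.mul (isBigO_refl _ _)).trans_tendsto (tendsto_one_add_abs_rpow_mul_exp_neg_abs k hc)

theorem Asymptotics.IsBigO.integrable_mul_exp_neg_abs (hgc : Continuous g)
    (hg : g =O[cocompact ℝ] fun x => (1 + |x|) ^ k) (hc : 0 < c) :
    Integrable fun x => g x * exp (-(c * |x|)) := by
  have hw : Integrable fun x : ℝ => (1 + ‖x‖) ^ (-2 : ℝ) :=
    integrable_one_add_norm (by norm_num)
  have hsplit : (fun x : ℝ => (1 + |x|) ^ k * exp (-(c * |x|))) =
      fun x => (1 + |x|) ^ (k + 2) * exp (-(c * |x|)) * (1 + ‖x‖) ^ (-2 : ℝ) := by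
    funext x
    rw [Real.norm_eq_abs, mul_right_comm, ← rpow_add (by positivity), add_neg_cancel_right]
  refine (hgc.mul (by fun_prop)).locallyIntegrable.integrable_of_isBigO_cocompact ?_
    (hw.integrableAtFilter _)
  calc (fun x => g x * exp (-(c * |x|)))
      _ =O[cocompact ℝ] fun x => (1 + |x|) ^ k * exp (-(c * |x|)) := hg.mul (isBigO_refl _ _)
      _ =O[cocompact ℝ] fun x => 1 * (1 + ‖x‖) ^ (-2 : ℝ) := by
        rw [hsplit]
        exact ((tendsto_one_add_abs_rpow_mul_exp_neg_abs (k + 2) hc).isBigO_one ℝ).mul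
          (isBigO_refl _ _)
      _ = fun x => (1 + ‖x‖) ^ (-2 : ℝ) := by simp only [one_mul]

end PolynomialGrowth

section LaplaceKernel

variable {f f' f'' : ℝ → ℝ} {c : ℝ}

-- Stated with `|x|` rather than `x` so that the integrands are those of the whole-line identity.
theorem integral_Ioi_mul_exp_neg_abs (hf : ∀ x, HasDerivAt f (f' x) x)
    (hf' : ∀ x, HasDerivAt f' (f'' x) x)
    (hfi : IntegrableOn (fun x => f x * exp (-(c * |x|))) (Ioi 0))
    (hf''i : IntegrableOn (fun x => f'' x * exp (-(c * |x|))) (Ioi 0))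
    (hf0 : Tendsto (fun x => f x * exp (-(c * |x|))) atTop (𝓝 0))
    (hf'0 : Tendsto (fun x => f' x * exp (-(c * |x|))) atTop (𝓝 0)) :
    c ^ 2 * ∫ x in Ioi 0, f x * exp (-(c * |x|)) =
      c * f 0 + f' 0 + ∫ x in Ioi 0, f'' x * exp (-(c * |x|)) := by
  have hE : ∀ x ∈ Ioi (0 : ℝ),
      HasDerivAt (fun x => exp (-(c * |x|))) (-c * exp (-(c * |x|))) x := fun x hx =>
    ((hasDerivAt_abs_pos hx).const_mul c).neg.exp.congr_deriv (by simp only [Pi.neg_apply]; ring)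
  have hG : ∀ x ∈ Ioi (0 : ℝ), HasDerivAt (fun x => -(c * f x + f' x) * exp (-(c * |x|)))
      (c ^ 2 * (f x * exp (-(c * |x|))) - f'' x * exp (-(c * |x|))) x := fun x hx =>
    ((((hf x).const_mul c).add (hf' x)).neg.mul (hE x hx)).congr_deriv
      (by simp only [Pi.neg_apply, Pi.add_apply]; ring)
  have hfc : Continuous f := continuous_iff_continuousAt.2 fun x => (hf x).continuousAt
  have hf'c : Continuous f' := continuous_iff_continuousAt.2 fun x => (hf' x).continuousAt
  have hGlim : Tendsto (fun x => -(c * f x + f' x) * exp (-(c * |x|))) atTop (𝓝 0) := by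
    have := ((hf0.const_mul c).add hf'0).neg
    rw [mul_zero, add_zero, neg_zero] at this
    exact this.congr fun x => by ring
  have hFTC := integral_Ioi_of_hasDerivAt_of_tendsto (by fun_prop) hG
    ((hfi.const_mul (c ^ 2)).sub hf''i) hGlim
  rw [integral_sub (hfi.const_mul _) hf''i, integral_const_mul] at hFTC
  simp only [abs_zero, mul_zero, neg_zero, exp_zero, mul_one, zero_sub, neg_neg] at hFTC
  linarith

theorem integral_eq_integral_Ioi_comp_neg_add_integral_Ioi {E : Type*} [NormedAddCommGroup E]
    [NormedSpace ℝ E] {g : ℝ → E} (hg : Integrable g) :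
    ∫ x, g x = (∫ x in Ioi 0, g (-x)) + ∫ x in Ioi 0, g x := by
  rw [integral_comp_neg_Ioi, neg_zero,
    intervalIntegral.integral_Iic_add_Ioi hg.integrableOn hg.integrableOn]

theorem integral_mul_exp_neg_abs {k₀ k₁ k₂ : ℝ} (hc : 0 < c) (hf : ∀ x, HasDerivAt f (f' x) x)
    (hf' : ∀ x, HasDerivAt f' (f'' x) x) (hf''c : Continuous f'')
    (hf_growth : f =O[cocompact ℝ] fun x => (1 + |x|) ^ k₀)
    (hf'_growth : f' =O[cocompact ℝ] fun x => (1 + |x|) ^ k₁)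
    (hf''_growth : f'' =O[cocompact ℝ] fun x => (1 + |x|) ^ k₂) :
    c ^ 2 * ∫ x, f x * exp (-(c * |x|)) = 2 * c * f 0 + ∫ x, f'' x * exp (-(c * |x|)) := by
  have hfi := hf_growth.integrable_mul_exp_neg_abs
    (continuous_iff_continuousAt.2 fun x => (hf x).continuousAt) hc
  have hf''i := hf''_growth.integrable_mul_exp_neg_abs hf''c hc
  have hf0 := hf_growth.tendsto_mul_exp_neg_abs hc
  have hf'0 := hf'_growth.tendsto_mul_exp_neg_abs hc
  have hneg : Tendsto (fun x : ℝ => -x) atTop (cocompact ℝ) :=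
    tendsto_neg_atTop_atBot.mono_right atBot_le_cocompact
  have right := integral_Ioi_mul_exp_neg_abs hf hf' hfi.integrableOn hf''i.integrableOn
    (hf0.mono_left atTop_le_cocompact) (hf'0.mono_left atTop_le_cocompact)
  have left := integral_Ioi_mul_exp_neg_abs (c := c) (f := fun x => f (-x))
    (f' := fun x => -f' (-x)) (f'' := fun x => f'' (-x))
    (fun x => ((hf (-x)).comp x (hasDerivAt_neg x)).congr_deriv (by ring))
    (fun x => ((hf' (-x)).comp x (hasDerivAt_neg x)).neg.congr_deriv (by ring))
    (by simpa only [abs_neg] using hfi.comp_neg.integrableOn)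
    (by simpa only [abs_neg] using hf''i.comp_neg.integrableOn)
    (by simpa only [Function.comp_def, abs_neg] using hf0.comp hneg)
    (by simpa only [Function.comp_def, abs_neg, neg_mul, neg_zero] using (hf'0.comp hneg).neg)
  rw [integral_eq_integral_Ioi_comp_neg_add_integral_Ioi hfi,
    integral_eq_integral_Ioi_comp_neg_add_integral_Ioi hf''i]
  simp only [abs_neg, neg_zero] at left ⊢
  linarith

end LaplaceKernel

theorem integral_symExpLaw (g : ℝ → ℝ) :
    ∫ x, g x ∂symExpLaw = (√2)⁻¹ * ∫ x, g x * exp (-(√2 * |x|)) := by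
  rw [symExpLaw, integral_withDensity_eq_integral_toReal_smul (by fun_prop)
    (Eventually.of_forall fun _ => ENNReal.ofReal_lt_top), ← integral_const_mul]
  congr 1 with x
  rw [ENNReal.toReal_ofReal (by positivity), smul_eq_mul]
  ring

theorem integral_symExpLaw_eq_of_hasDerivAt {f f' f'' : ℝ → ℝ} {k₀ k₁ k₂ : ℝ}
    (hf : ∀ x, HasDerivAt f (f' x) x) (hf' : ∀ x, HasDerivAt f' (f'' x) x)
    (hf''c : Continuous f'')
    (hf_growth : f =O[cocompact ℝ] fun x => (1 + |x|) ^ k₀)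
    (hf'_growth : f' =O[cocompact ℝ] fun x => (1 + |x|) ^ k₁)
    (hf''_growth : f'' =O[cocompact ℝ] fun x => (1 + |x|) ^ k₂) :
    ∫ x, f x ∂symExpLaw = f 0 + 2⁻¹ * ∫ x, f'' x ∂symExpLaw := by
  have h := integral_mul_exp_neg_abs (sqrt_pos.2 two_pos) hf hf' hf''c
    hf_growth hf'_growth hf''_growth
  rw [sq_sqrt zero_le_two] at h
  rw [integral_symExpLaw, integral_symExpLaw]
  have hs : (√2 : ℝ) ≠ 0 := by positivity
  field_simp
  linear_combination h

theorem isBigO_abs_mul_add_rpow (a b : ℝ) {q : ℝ} (hq : 0 ≤ q) :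
    (fun x : ℝ => |a * x + b| ^ q) =O[cocompact ℝ] fun x => (1 + |x|) ^ q := by
  refine IsBigO.of_bound ((|a| + |b|) ^ q) (Eventually.of_forall fun x => ?_)
  rw [norm_of_nonneg (by positivity), norm_of_nonneg (by positivity), ← mul_rpow (by positivity)
    (by positivity)]
  refine rpow_le_rpow (abs_nonneg _) ?_ hq
  calc |a * x + b| ≤ |a| * |x| + |b| := by rw [← abs_mul]; exact abs_add_le _ _
    _ ≤ (|a| + |b|) * (1 + |x|) := by nlinarith [abs_nonneg a, abs_nonneg b, abs_nonneg x]

theorem integral_abs_mul_add_rpow_symExpLaw (a b : ℝ) {p : ℝ} (hp : 2 ≤ p) :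
    ∫ x, |a * x + b| ^ p ∂symExpLaw =
      |b| ^ p + (p * (p - 1) / 2) * a ^ 2 * ∫ x, |a * x + b| ^ (p - 2) ∂symExpLaw := by
  have haff (x : ℝ) : HasDerivAt (fun x => a * x + b) a x :=
    ((hasDerivAt_id x).const_mul a).add_const b |>.congr_deriv (mul_one a)
  have hf (x : ℝ) : HasDerivAt (fun x => |a * x + b| ^ p)
      (p * a * ((a * x + b) * |a * x + b| ^ (p - 2))) x :=
    ((hasDerivAt_abs_rpow _ (by linarith)).comp x (haff x)).congr_deriv (by ring)
  have hf' (x : ℝ) : HasDerivAt (fun x => p * a * ((a * x + b) * |a * x + b| ^ (p - 2)))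
      (p * (p - 1) * a ^ 2 * |a * x + b| ^ (p - 2)) x :=
    (((hasDerivAt_mul_abs_rpow (by linarith) _).comp x (haff x)).const_mul (p * a)).congr_deriv
      (by ring)
  have hf'_growth : (fun x => p * a * ((a * x + b) * |a * x + b| ^ (p - 2))) =O[cocompact ℝ]
      fun x => (1 + |x|) ^ (p - 1) := by
    refine IsBigO.trans (isBigO_of_le' (c := |p * a|) (g := fun x => |a * x + b| ^ (p - 1))
      _ fun x => le_of_eq ?_) (isBigO_abs_mul_add_rpow a b (by linarith))
    simp only [Real.norm_eq_abs, abs_mul, abs_of_nonneg (rpow_nonneg (abs_nonneg _) _)]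
    rw [show p - 1 = p - 2 + 1 by ring, rpow_add_one' (abs_nonneg _) (by linarith)]
    ring
  rw [integral_symExpLaw_eq_of_hasDerivAt hf hf'
    (continuous_const.mul ((continuous_abs.comp (by fun_prop)).rpow_const
      fun _ => Or.inr (by linarith)))
    (isBigO_abs_mul_add_rpow a b (by linarith)) hf'_growth
    ((isBigO_abs_mul_add_rpow a b (by linarith)).const_mul_left _), integral_const_mul]
  simp only [mul_zero, zero_add]
  ring

theorem stmt8_general
    {Ω : Type*} [MeasurableSpace Ω] (μ : Measure Ω)
    (E : Ω → ℝ) (hEmeas : Measurable E) (hElaw : Measure.map E μ = symExpLaw)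
    (a b : ℝ) (p : ℝ) (hp : 2 ≤ p) :
    ∫ ω, |a * E ω + b| ^ p ∂μ =
      |b| ^ p + (p * (p - 1) / 2) * a ^ 2 * ∫ ω, |a * E ω + b| ^ (p - 2) ∂μ := by
  have hlaw (q : ℝ) : ∫ ω, |a * E ω + b| ^ q ∂μ = ∫ x, |a * x + b| ^ q ∂symExpLaw := by
    rw [← hElaw, integral_map hEmeas.aemeasurable (Measurable.aestronglyMeasurable (by fun_prop))]
  rw [hlaw, hlaw, integral_abs_mul_add_rpow_symExpLaw a b hp]

/-- for `ℰ` symmetric exponential with variance 1, all reals `a, b` and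
`p ≥ 2`, `E|aℰ + b|^p = |b|^p + (p(p-1)/2) a² E|aℰ + b|^{p-2}`. -/
theorem stmt8
    {Ω : Type*} [MeasurableSpace Ω] (μ : Measure Ω) [IsProbabilityMeasure μ]
    (E : Ω → ℝ) (hEmeas : Measurable E) (hElaw : Measure.map E μ = symExpLaw)
    (a b : ℝ) (p : ℝ) (hp : 2 ≤ p) :
    ∫ ω, |a * E ω + b| ^ p ∂μ =
      |b| ^ p + (p * (p - 1) / 2) * a ^ 2 * ∫ ω, |a * E ω + b| ^ (p - 2) ∂μ :=
  stmt8_general μ E hEmeas hElaw a b p hp
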